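/- Let K be a simplicial complex on [m], let K_1,…,K_m be simplicial complexes on finite vertex sets V_1,…,V_m, and let K(K_1,…,K_m) be the substitution complex on V = V_1 ⊔ ⋯ ⊔ V_m. Let (G_v)_{v∈V} be a family of groups. Then the graph product of the family (G_v)_{v∈V} over the simplicial complex K(K_1,…,K_m) is isomorphic to the graph product over K of the groups H_1,…,H_m, where H_t is the graph product of (G_v)_{v∈V_t} over K_t, via the isomorphism matching the canonical homomorphism from G_v (v ∈ V_t) into the first group with the composite G_v → H_t → (H_1,…,H_m)^K of canonical homomorphisms. -/

import Mathlib

/-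
The relations of the substitution complex are exactly the relations of the iterated graph
product: an edge `{(t, v), (t, v')}` inside one block is an edge `{v, v'}` of `K_t`, and an edge
`{(t, v), (t', v')}` with `t ≠ t'` is present precisely when `{t, t'}` is an edge of `K`
(singletons being faces of `K` and of every `K_t`, and `∅` a face of every `K_t`). So the
two presentations have the same generators and relations, and the universal properties give
mutually inverse homomorphisms.
-/

open Monoid

/-- The graph product of a family of groups `(G i)_{i ∈ ι}` over a simplicial complex
`K` on the vertex set `ι`: the quotient of the free product by the normal closure of the
commutators `g_u⁻¹ g_w⁻¹ g_u g_w` for edges `{u, w} ∈ K`. -/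
def graphProduct {ι : Type} [DecidableEq ι] (K : Set (Finset ι)) (G : ι → Type)
    [∀ i, Group (G i)] : Type :=
  CoprodI G ⧸ Subgroup.normalClosure
    {x | ∃ (u w : ι) (gu : G u) (gw : G w), u ≠ w ∧ ({u, w} : Finset ι) ∈ K ∧
      x = (CoprodI.of gu)⁻¹ * (CoprodI.of gw)⁻¹ * CoprodI.of gu * CoprodI.of gw}

instance {ι : Type} [DecidableEq ι] (K : Set (Finset ι)) (G : ι → Type)
    [∀ i, Group (G i)] : Group (graphProduct K G) :=
  inferInstanceAs (Group (_ ⧸ _))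

/-- The canonical homomorphism `G i → graphProduct K G`. -/
def gpOf {ι : Type} [DecidableEq ι] (K : Set (Finset ι)) (G : ι → Type)
    [∀ i, Group (G i)] (i : ι) : G i →* graphProduct K G :=
  (QuotientGroup.mk' _).comp CoprodI.of

/-- The substitution complex `K(K_1, …, K_m)` on `V_1 ⊔ ⋯ ⊔ V_m`: its faces are the
sets `I_{j_1} ⊔ ⋯ ⊔ I_{j_k}` with `I_{j_l} ∈ K_{j_l}` and `{j_1,…,j_k} ∈ K`;
equivalently, the finsets `F` whose projection to `[m]` is a face of `K` and whose
slice over each `t` is a face of `K_t`. -/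
def substComplex {m : ℕ} (K : Set (Finset (Fin m))) {V : Fin m → Type}
    [∀ t, DecidableEq (V t)] (Kt : (t : Fin m) → Set (Finset (V t))) :
    Set (Finset (Σ t : Fin m, V t)) :=
  {F | F.image Sigma.fst ∈ K ∧
    ∀ t : Fin m, F.preimage (Sigma.mk t) sigma_mk_injective.injOn ∈ Kt t}

namespace graphProduct

variable {ι : Type} [DecidableEq ι] {K : Set (Finset ι)} {G : ι → Type} [∀ i, Group (G i)]
  {H : Type} [Group H]

theorem commute_gpOf {u w : ι} (huw : u ≠ w) (hK : ({u, w} : Finset ι) ∈ K)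
    (gu : G u) (gw : G w) : Commute (gpOf K G u gu) (gpOf K G w gw) := by
  have hrel : gpOf K G u gu⁻¹ * gpOf K G w gw⁻¹ * gpOf K G u gu * gpOf K G w gw = 1 :=
    (QuotientGroup.eq_one_iff _).mpr <|
      Subgroup.subset_normalClosure ⟨u, w, gu, gw, huw, hK, rfl⟩
  rw [← Commute.inv_inv_iff, ← commutatorElement_eq_one_iff_commute, commutatorElement_def]
  simpa only [inv_inv, map_inv] using hrel

variable (K) in
def lift (f : ∀ i, G i →* H)
    (hf : ∀ u w : ι, u ≠ w → ({u, w} : Finset ι) ∈ K →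
      ∀ (gu : G u) (gw : G w), Commute (f u gu) (f w gw)) :
    graphProduct K G →* H :=
  QuotientGroup.lift _ (CoprodI.lift f) <| Subgroup.normalClosure_le_normal <| by
    rintro _ ⟨u, w, gu, gw, huw, hK, rfl⟩
    have hcomm := commutatorElement_eq_one_iff_commute.mpr (hf u w huw hK gu gw).inv_inv
    simpa only [SetLike.mem_coe, MonoidHom.mem_ker, map_mul, map_inv, CoprodI.lift_of,
      commutatorElement_def, inv_inv] using hcomm

@[simp] theorem lift_gpOf (f : ∀ i, G i →* H) (hf) (i : ι) (g : G i) :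
    lift K f hf (gpOf K G i g) = f i g :=
  CoprodI.lift_of f g

@[ext] theorem hom_ext {f f' : graphProduct K G →* H}
    (h : ∀ i, f.comp (gpOf K G i) = f'.comp (gpOf K G i)) : f = f' :=
  QuotientGroup.monoidHom_ext _ <| CoprodI.ext_hom _ _ h

theorem commute_of_commute_gpOf (f : graphProduct K G →* H) {c : H}
    (hc : ∀ i (g : G i), Commute c (f (gpOf K G i g))) (x : graphProduct K G) :
    Commute c (f x) := by
  have hconj : (MulAut.conj c).toMonoidHom.comp f = f := by
    ext i g
    simp [(hc i g).eq]
  have := DFunLike.congr_fun hconj x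
  simp only [MonoidHom.comp_apply, MulEquiv.coe_toMonoidHom, MulAut.conj_apply] at this
  exact mul_inv_eq_iff_eq_mul.mp this

end graphProduct

section substComplex

variable {m : ℕ} {K : Set (Finset (Fin m))} {V : Fin m → Type} [∀ t, DecidableEq (V t)]
  {Kt : (t : Fin m) → Set (Finset (V t))}

theorem image_fst_pair (t t' : Fin m) (v : V t) (v' : V t') :
    ({⟨t, v⟩, ⟨t', v'⟩} : Finset (Σ t, V t)).image Sigma.fst = {t, t'} := by
  simp

theorem preimage_mk_pair_self (t : Fin m) (v v' : V t) :
    ({⟨t, v⟩, ⟨t, v'⟩} : Finset (Σ t, V t)).preimage (Sigma.mk t)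
      sigma_mk_injective.injOn = {v, v'} := by
  ext x
  simp

theorem preimage_mk_pair_of_ne {s t t' : Fin m} (hs : s ≠ t) (hs' : s ≠ t') (v : V t)
    (v' : V t') :
    ({⟨t, v⟩, ⟨t', v'⟩} : Finset (Σ t, V t)).preimage (Sigma.mk s)
      sigma_mk_injective.injOn = ∅ := by
  ext x
  simp [hs, hs']

theorem preimage_mk_pair_left {t t' : Fin m} (htt : t ≠ t') (v : V t) (v' : V t') :
    ({⟨t, v⟩, ⟨t', v'⟩} : Finset (Σ t, V t)).preimage (Sigma.mk t)
      sigma_mk_injective.injOn = {v} := by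
  ext x
  simp [htt]

theorem pair_mk_mem_substComplex_of_mem (hsingle : ∀ t, ({t} : Finset (Fin m)) ∈ K)
    (hempty : ∀ t, ∅ ∈ Kt t) {t : Fin m} {v v' : V t}
    (h : ({v, v'} : Finset (V t)) ∈ Kt t) :
    ({⟨t, v⟩, ⟨t, v'⟩} : Finset (Σ t, V t)) ∈ substComplex K Kt := by
  have himage : ({t, t} : Finset (Fin m)) ∈ K := by
    rw [Finset.pair_eq_singleton]
    exact hsingle t
  refine ⟨by rwa [image_fst_pair], fun s => ?_⟩
  obtain rfl | hs := eq_or_ne s t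
  · rwa [preimage_mk_pair_self]
  · rw [preimage_mk_pair_of_ne hs hs]
    exact hempty s

theorem pair_mk_mem_substComplex_of_ne (hempty : ∀ t, ∅ ∈ Kt t)
    (hsingle : ∀ t, ∀ v : V t, ({v} : Finset (V t)) ∈ Kt t) {t t' : Fin m} (htt : t ≠ t')
    (hK : ({t, t'} : Finset (Fin m)) ∈ K) (v : V t) (v' : V t') :
    ({⟨t, v⟩, ⟨t', v'⟩} : Finset (Σ t, V t)) ∈ substComplex K Kt := by
  refine ⟨by rwa [image_fst_pair], fun s => ?_⟩
  obtain rfl | hs := eq_or_ne s t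
  · rw [preimage_mk_pair_left htt]
    exact hsingle s v
  obtain rfl | hs' := eq_or_ne s t'
  · rw [Finset.pair_comm, preimage_mk_pair_left htt.symm]
    exact hsingle s v'
  · rw [preimage_mk_pair_of_ne hs hs']
    exact hempty s

variable (G : (Σ t : Fin m, V t) → Type) [∀ v, Group (G v)]

theorem commute_gpOf_gpOf_of_mem_substComplex {u w : Σ t, V t} (huw : u ≠ w)
    (h : ({u, w} : Finset (Σ t, V t)) ∈ substComplex K Kt) (gu : G u) (gw : G w) :
    Commute
      (gpOf K (fun t => graphProduct (Kt t) (fun v : V t => G ⟨t, v⟩)) u.1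
        (gpOf (Kt u.1) (fun v : V u.1 => G ⟨u.1, v⟩) u.2 gu))
      (gpOf K (fun t => graphProduct (Kt t) (fun v : V t => G ⟨t, v⟩)) w.1
        (gpOf (Kt w.1) (fun v : V w.1 => G ⟨w.1, v⟩) w.2 gw)) := by
  obtain ⟨t, v⟩ := u
  obtain ⟨t', v'⟩ := w
  obtain rfl | htt := eq_or_ne t t'
  · have hslice := h.2 t
    rw [preimage_mk_pair_self] at hslice
    exact (graphProduct.commute_gpOf (G := fun v : V t => G ⟨t, v⟩)
      (fun hv => huw (by rw [hv])) hslice gu gw).map _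
  · have himage := h.1
    rw [image_fst_pair] at himage
    exact graphProduct.commute_gpOf htt himage _ _

def substComplexToIterated :
    graphProduct (substComplex K Kt) G →*
      graphProduct K (fun t => graphProduct (Kt t) (fun v : V t => G ⟨t, v⟩)) :=
  graphProduct.lift _
    (fun u => (gpOf K (fun t => graphProduct (Kt t) (fun v : V t => G ⟨t, v⟩)) u.1).comp
      (gpOf (Kt u.1) (fun v : V u.1 => G ⟨u.1, v⟩) u.2))
    fun _ _ huw h => commute_gpOf_gpOf_of_mem_substComplex G huw h

@[simp] theorem substComplexToIterated_gpOf (t : Fin m) (v : V t) (g : G ⟨t, v⟩) :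
    substComplexToIterated G (gpOf (substComplex K Kt) G ⟨t, v⟩ g) =
      gpOf K (fun t => graphProduct (Kt t) (fun v : V t => G ⟨t, v⟩)) t
        (gpOf (Kt t) (fun v : V t => G ⟨t, v⟩) v g) :=
  graphProduct.lift_gpOf _ _ _ _

variable (hsingle : ∀ t, ({t} : Finset (Fin m)) ∈ K) (hempty : ∀ t, ∅ ∈ Kt t)

def blockToSubstComplex (t : Fin m) :
    graphProduct (Kt t) (fun v : V t => G ⟨t, v⟩) →* graphProduct (substComplex K Kt) G :=
  graphProduct.lift _ (fun v => gpOf _ G ⟨t, v⟩) fun _ _ hvv h =>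
    graphProduct.commute_gpOf (fun h' => hvv (sigma_mk_injective h'))
      (pair_mk_mem_substComplex_of_mem hsingle hempty h)

theorem commute_blockToSubstComplex
    (hsingle' : ∀ t, ∀ v : V t, ({v} : Finset (V t)) ∈ Kt t) {t t' : Fin m} (htt : t ≠ t')
    (hK : ({t, t'} : Finset (Fin m)) ∈ K) (x : graphProduct (Kt t) (fun v : V t => G ⟨t, v⟩))
    (y : graphProduct (Kt t') (fun v : V t' => G ⟨t', v⟩)) :
    Commute (blockToSubstComplex G hsingle hempty t x)
      (blockToSubstComplex G hsingle hempty t' y) := by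
  refine graphProduct.commute_of_commute_gpOf _ (fun v' g' => ?_) y
  refine (graphProduct.commute_of_commute_gpOf _ (fun v g => ?_) x).symm
  simp only [blockToSubstComplex, graphProduct.lift_gpOf]
  exact graphProduct.commute_gpOf (fun h => htt (congrArg Sigma.fst h).symm)
    (pair_mk_mem_substComplex_of_ne hempty hsingle' htt.symm (Finset.pair_comm t t' ▸ hK) v' v)
    g' g

def iteratedToSubstComplex (hsingle' : ∀ t, ∀ v : V t, ({v} : Finset (V t)) ∈ Kt t) :
    graphProduct K (fun t => graphProduct (Kt t) (fun v : V t => G ⟨t, v⟩)) →*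
      graphProduct (substComplex K Kt) G :=
  graphProduct.lift _ (blockToSubstComplex G hsingle hempty)
    fun _ _ htt hK => commute_blockToSubstComplex G hsingle hempty hsingle' htt hK

@[simp] theorem iteratedToSubstComplex_gpOf_gpOf
    (hsingle' : ∀ t, ∀ v : V t, ({v} : Finset (V t)) ∈ Kt t) (t : Fin m) (v : V t)
    (g : G ⟨t, v⟩) :
    iteratedToSubstComplex G hsingle hempty hsingle'
        (gpOf K (fun t => graphProduct (Kt t) (fun v : V t => G ⟨t, v⟩)) t
          (gpOf (Kt t) (fun v : V t => G ⟨t, v⟩) v g)) =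
      gpOf (substComplex K Kt) G ⟨t, v⟩ g := by
  simp [iteratedToSubstComplex, blockToSubstComplex]

end substComplex

theorem substComplex_graphProduct_general {m : ℕ} (K : Set (Finset (Fin m)))
    (hsingle : ∀ i : Fin m, ({i} : Finset (Fin m)) ∈ K)
    (V : Fin m → Type) [∀ t, DecidableEq (V t)]
    (Kt : (t : Fin m) → Set (Finset (V t)))
    (hempty' : ∀ t, ∅ ∈ Kt t)
    (hsingle' : ∀ t, ∀ v : V t, ({v} : Finset (V t)) ∈ Kt t)
    (G : (Σ t : Fin m, V t) → Type) [∀ v, Group (G v)] :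
    ∃ e : graphProduct (substComplex K Kt) G ≃*
        graphProduct K (fun t => graphProduct (Kt t) (fun v : V t => G ⟨t, v⟩)),
      ∀ (t : Fin m) (v : V t) (g : G ⟨t, v⟩),
        e (gpOf (substComplex K Kt) G ⟨t, v⟩ g) =
          gpOf K (fun t => graphProduct (Kt t) (fun v : V t => G ⟨t, v⟩)) t
            (gpOf (Kt t) (fun v : V t => G ⟨t, v⟩) v g) := by
  refine ⟨MonoidHom.toMulEquiv (substComplexToIterated G)
    (iteratedToSubstComplex G hsingle hempty' hsingle') ?_ ?_, substComplexToIterated_gpOf G⟩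
  · ext ⟨t, v⟩ g
    simp
  · ext t v g
    simp

/-- The graph product of the family `(G_v)_{v ∈ V_1 ⊔ ⋯ ⊔ V_m}` over
the substitution complex `K(K_1,…,K_m)` is isomorphic to the graph product over `K` of
the graph products `H_t` of `(G_v)_{v ∈ V_t}` over `K_t`, compatibly with the canonical
homomorphisms from the `G_v`. -/
theorem substComplex_graphProduct {m : ℕ} (K : Set (Finset (Fin m)))
    (hdown : ∀ I ∈ K, ∀ J ⊆ I, J ∈ K) (hempty : ∅ ∈ K)
    (hsingle : ∀ i : Fin m, ({i} : Finset (Fin m)) ∈ K)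
    (V : Fin m → Type) [∀ t, DecidableEq (V t)] [∀ t, Fintype (V t)]
    (Kt : (t : Fin m) → Set (Finset (V t)))
    (hdown' : ∀ t, ∀ I ∈ Kt t, ∀ J ⊆ I, J ∈ Kt t) (hempty' : ∀ t, ∅ ∈ Kt t)
    (hsingle' : ∀ t, ∀ v : V t, ({v} : Finset (V t)) ∈ Kt t)
    (G : (Σ t : Fin m, V t) → Type) [∀ v, Group (G v)] :
    ∃ e : graphProduct (substComplex K Kt) G ≃*
        graphProduct K (fun t => graphProduct (Kt t) (fun v : V t => G ⟨t, v⟩)),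
      ∀ (t : Fin m) (v : V t) (g : G ⟨t, v⟩),
        e (gpOf (substComplex K Kt) G ⟨t, v⟩ g) =
          gpOf K (fun t => graphProduct (Kt t) (fun v : V t => G ⟨t, v⟩)) t
            (gpOf (Kt t) (fun v : V t => G ⟨t, v⟩) v g) :=
  substComplex_graphProduct_general K hsingle V Kt hempty' hsingle' G
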